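/- arXiv:1702.00713 — 14 statements merged into one kernel-verified Lean document; each statement's English description precedes it below -/
import Mathlib

section
/- Let ψ, φ, θ, h, λ be real numbers with 1 − φλθ ≠ 0 and suppose ψ + φλ(1−θ) = e^{λh}(1 − φλθ). Then every sequence x : ℕ → ℝ satisfying x_{k+1} − ψ x_k = φλ(θ x_{k+1} + (1−θ) x_k) for all k satisfies x_k = e^{λkh} x_0 for all k. In particular, the implicit scheme applied componentwise to the diagonal system x' = λ₁x, y' = λ₂y, z' = λ₃z is exact whenever the above identity holds for each eigenvalue λᵢ with 1 − φλᵢθ ≠ 0. -/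
lemma scheme_aux (ψ φ θ h lam : ℝ) (h1 : 1 - φ * lam * θ ≠ 0)
    (h2 : ψ + φ * lam * (1 - θ) = Real.exp (lam * h) * (1 - φ * lam * θ))
    (x : ℕ → ℝ)
    (hx : ∀ k, x (k + 1) - ψ * x k = φ * lam * (θ * x (k + 1) + (1 - θ) * x k)) :
    ∀ k : ℕ, x k = Real.exp (lam * k * h) * x 0 := by
  intro k
  induction k with
  | zero => simp
  | succ n ih =>
    have key : x (n + 1) * (1 - φ * lam * θ) = Real.exp (lam * h) * (1 - φ * lam * θ) * x n := by
      have := hx n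
      rw [← h2]; nlinarith [hx n]
    have hstep : x (n + 1) = Real.exp (lam * h) * x n :=
      mul_right_cancel₀ h1 (by rw [key]; ring)
    rw [hstep, ih, ← mul_assoc, ← Real.exp_add]
    push_cast
    ring_nf
  
/-- If `ψ + φλ(1−θ) = e^{λh}(1 − φλθ)` with `1 − φλθ ≠ 0`, then any
solution of the implicit scheme for `x' = λx` coincides with the exact solution at the
grid points; in particular, the scheme applied componentwise to a diagonal system is
exact whenever the identity holds for each eigenvalue. -/
theorem implicit_scheme_scalar_exact
    (ψ φ θ h lam : ℝ) (h1 : 1 - φ * lam * θ ≠ 0)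
    (h2 : ψ + φ * lam * (1 - θ) = Real.exp (lam * h) * (1 - φ * lam * θ)) :
    (∀ x : ℕ → ℝ,
      (∀ k, x (k + 1) - ψ * x k = φ * lam * (θ * x (k + 1) + (1 - θ) * x k)) →
      ∀ k : ℕ, x k = Real.exp (lam * k * h) * x 0) ∧
    (∀ l1 l2 l3 : ℝ,
      (1 - φ * l1 * θ ≠ 0 ∧ ψ + φ * l1 * (1 - θ) = Real.exp (l1 * h) * (1 - φ * l1 * θ)) →
      (1 - φ * l2 * θ ≠ 0 ∧ ψ + φ * l2 * (1 - θ) = Real.exp (l2 * h) * (1 - φ * l2 * θ)) →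
      (1 - φ * l3 * θ ≠ 0 ∧ ψ + φ * l3 * (1 - θ) = Real.exp (l3 * h) * (1 - φ * l3 * θ)) →
      ∀ x y z : ℕ → ℝ,
        (∀ k, x (k + 1) - ψ * x k = φ * l1 * (θ * x (k + 1) + (1 - θ) * x k)) →
        (∀ k, y (k + 1) - ψ * y k = φ * l2 * (θ * y (k + 1) + (1 - θ) * y k)) →
        (∀ k, z (k + 1) - ψ * z k = φ * l3 * (θ * z (k + 1) + (1 - θ) * z k)) →
        ∀ k : ℕ, x k = Real.exp (l1 * k * h) * x 0 ∧
          y k = Real.exp (l2 * k * h) * y 0 ∧ z k = Real.exp (l3 * k * h) * z 0) := by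
  refine ⟨fun x hx => scheme_aux ψ φ θ h lam h1 h2 x hx, ?_⟩
  intro l1 l2 l3 ⟨a1, b1⟩ ⟨a2, b2⟩ ⟨a3, b3⟩ x y z hx hy hz k
  exact ⟨scheme_aux ψ φ θ h l1 a1 b1 x hx k, scheme_aux ψ φ θ h l2 a2 b2 y hy k,
    scheme_aux ψ φ θ h l3 a3 b3 z hz k⟩
end

section
/- Let h > 0 and let λ₁, λ₂, λ₃ be pairwise distinct real numbers. Write e_i = e^{λᵢh}. Define T₁ = λ₁(e₂ − e₃) + λ₂(e₃ − e₁) + λ₃(e₁ − e₂) and T₂ = λ₁(1 − e₁)(e₂ − e₃) + λ₂(1 − e₂)(e₃ − e₁) + λ₃(1 − e₃)(e₁ − e₂). Assume T₂ ≠ 0 and set θ = T₁/T₂. Define C₁ = λ₂ − λ₁ + λ₁e₁ − λ₂e₂, assume λ₁ − λ₂ + θC₁ ≠ 0, and set φ = (e₁ − e₂)/(λ₁ − λ₂ + θC₁) and ψ = e₃ − φλ₃(e₃θ + 1 − θ). Then for each i ∈ {1, 2, 3}: ψ + φλᵢ(1 − θ) = e^{λᵢh}(1 − φλᵢθ). 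-/
/-- For three pairwise distinct eigenvalues, the parameters `ψ, φ, θ`
given by (12)-(13) satisfy the exactness conditions `ψ + φλᵢ(1−θ) = e^{λᵢh}(1 − φλᵢθ)`. -/
theorem implicit_params_three_distinct
    (h l1 l2 l3 : ℝ) (hh : 0 < h)
    (h12 : l1 ≠ l2) (h13 : l1 ≠ l3) (h23 : l2 ≠ l3)
    (e1 e2 e3 T1 T2 θ C1 φ ψ : ℝ)
    (he1 : e1 = Real.exp (l1 * h)) (he2 : e2 = Real.exp (l2 * h))
    (he3 : e3 = Real.exp (l3 * h))
    (hT1 : T1 = l1 * (e2 - e3) + l2 * (e3 - e1) + l3 * (e1 - e2))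
    (hT2 : T2 = l1 * (1 - e1) * (e2 - e3) + l2 * (1 - e2) * (e3 - e1)
      + l3 * (1 - e3) * (e1 - e2))
    (hT2ne : T2 ≠ 0) (hθ : θ = T1 / T2)
    (hC1 : C1 = l2 - l1 + l1 * e1 - l2 * e2)
    (hden : l1 - l2 + θ * C1 ≠ 0)
    (hφ : φ = (e1 - e2) / (l1 - l2 + θ * C1))
    (hψ : ψ = e3 - φ * l3 * (e3 * θ + 1 - θ)) :
    ψ + φ * l1 * (1 - θ) = Real.exp (l1 * h) * (1 - φ * l1 * θ) ∧
    ψ + φ * l2 * (1 - θ) = Real.exp (l2 * h) * (1 - φ * l2 * θ) ∧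
    ψ + φ * l3 * (1 - θ) = Real.exp (l3 * h) * (1 - φ * l3 * θ) := by
  rw [← he1, ← he2, ← he3]
  have hφD : φ * (l1 - l2 + θ * C1) = e1 - e2 := by
    rw [hφ]; field_simp
  have hθT : θ * T2 = T1 := by
    rw [hθ]; field_simp
  have hDT : (l1 - l2 + θ * C1) * T2 ≠ 0 := mul_ne_zero hden hT2ne
  refine ⟨?_, ?_, ?_⟩
  · have key : (ψ + φ * l1 * (1 - θ) - e1 * (1 - φ * l1 * θ)) *
        ((l1 - l2 + θ * C1) * T2) = 0 := by
      subst hψ hC1 hT1 hT2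
      linear_combination ((l1 * (1 - θ) + e1 * l1 * θ - l3 * (e3 * θ + 1 - θ)) * (l1 * (1 - e1) * (e2 - e3) + l2 * (1 - e2) * (e3 - e1) + l3 * (1 - e3) * (e1 - e2))) * hφD
        + ((e3 - e1) * (l2 - l1 + l1 * e1 - l2 * e2)
          + (e1 - e2) * (-l1 + e1 * l1 - l3 * e3 + l3)) * hθT
    have := (mul_eq_zero.mp key).resolve_right hDT
    linarith
  · have key : (ψ + φ * l2 * (1 - θ) - e2 * (1 - φ * l2 * θ)) *
        ((l1 - l2 + θ * C1) * T2) = 0 := by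
      subst hψ hC1 hT1 hT2
      linear_combination ((l2 * (1 - θ) + e2 * l2 * θ - l3 * (e3 * θ + 1 - θ)) * (l1 * (1 - e1) * (e2 - e3) + l2 * (1 - e2) * (e3 - e1) + l3 * (1 - e3) * (e1 - e2))) * hφD
        + ((e3 - e2) * (l2 - l1 + l1 * e1 - l2 * e2)
          + (e1 - e2) * (-l2 + e2 * l2 - l3 * e3 + l3)) * hθT
    have := (mul_eq_zero.mp key).resolve_right hDT
    linarith
  · rw [hψ]; ring
end

section
/- Let h > 0 and let α, β, λ be real numbers with β ≠ 0. Define T₁ = 2β(e^{αh}cos(βh) − e^{λh}) + 2e^{αh}(λ − α)sin(βh); T₂ = α(1 − e^{αh}cos(βh))(−2e^{αh}sin(βh)) + αe^{αh}sin(βh)(2e^{λh} − 2e^{αh}cos(βh)) + β(1 − e^{αh}cos(βh))(2e^{αh}cos(βh) − 2e^{λh}) + βe^{αh}sin(βh)(−2e^{αh}sin(βh)) + λ(1 − e^{λh})(2e^{αh}sin(βh)); and T₃ = −2β + 2αe^{αh}sin(βh) + 2βe^{αh}cos(βh). Assume T₂ ≠ 0, set θ = T₁/T₂, assume 2β + T₃θ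 ≠ 0, and set φ = 2e^{αh}sin(βh)/(2β + T₃θ) and ψ = e^{λh} − φλ(θe^{λh} + 1 − θ). Then for each complex number μ ∈ {α + βi, α − βi, λ}: ψ + φμ(1 − θ) = exp(μh)(1 − φμθ), where exp denotes the complex exponential and ψ, φ, θ, h are regarded as complex numbers. -/
open Real in
/-- For eigenvalues `α ± βi` (β ≠ 0) and `λ`, the parameters (15) satisfy
the exactness condition `ψ + φμ(1−θ) = exp(μh)(1 − φμθ)` for each eigenvalue `μ ∈ ℂ`. -/
theorem implicit_params_complex_eigenvalues
    (h α β lam : ℝ) (hh : 0 < h) (hβ : β ≠ 0)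
    (T1 T2 T3 θ φ ψ : ℝ)
    (hT1 : T1 = 2 * β * (exp (α * h) * cos (β * h) - exp (lam * h))
      + 2 * exp (α * h) * (lam - α) * sin (β * h))
    (hT2 : T2 = α * (1 - exp (α * h) * cos (β * h)) * (-2 * exp (α * h) * sin (β * h))
      + α * exp (α * h) * sin (β * h) * (2 * exp (lam * h) - 2 * exp (α * h) * cos (β * h))
      + β * (1 - exp (α * h) * cos (β * h)) * (2 * exp (α * h) * cos (β * h) - 2 * exp (lam * h))
      + β * exp (α * h) * sin (β * h) * (-2 * exp (α * h) * sin (β * h))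
      + lam * (1 - exp (lam * h)) * (2 * exp (α * h) * sin (β * h)))
    (hT3 : T3 = -2 * β + 2 * α * exp (α * h) * sin (β * h) + 2 * β * exp (α * h) * cos (β * h))
    (hT2ne : T2 ≠ 0) (hθ : θ = T1 / T2)
    (hden : 2 * β + T3 * θ ≠ 0)
    (hφ : φ = 2 * exp (α * h) * sin (β * h) / (2 * β + T3 * θ))
    (hψ : ψ = exp (lam * h) - φ * lam * (θ * exp (lam * h) + 1 - θ)) :
    ∀ μ : ℂ, (μ = (α : ℂ) + (β : ℂ) * Complex.I ∨ μ = (α : ℂ) - (β : ℂ) * Complex.I ∨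
        μ = (lam : ℂ)) →
      (ψ : ℂ) + (φ : ℂ) * μ * (1 - (θ : ℂ)) =
        Complex.exp (μ * (h : ℂ)) * (1 - (φ : ℂ) * μ * (θ : ℂ)) := by
  set E := exp (α * h) with hE
  set c := cos (β * h) with hc
  set s := sin (β * h) with hs
  set L := exp (lam * h) with hL
  -- key real facts
  have e1 : φ * (2 * β + T3 * θ) = 2 * E * s := by
    rw [hφ]; exact div_mul_cancel₀ _ hden
  have e2 : θ * T2 = T1 := by
    rw [hθ]; exact div_mul_cancel₀ _ hT2ne
  rw [hT3] at e1
  rw [hT1, hT2] at e2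
  -- imaginary-part identity
  have him : φ * β * (1 - θ) = E * s * (1 - φ * α * θ) - E * c * (φ * β * θ) := by
    linear_combination e1 / 2
  -- real-part identity
  have hre : ψ + φ * α * (1 - θ) = E * c * (1 - φ * α * θ) + E * s * (φ * β * θ) := by
    have key : (ψ + φ * α * (1 - θ)) * (2 * β + T3 * θ)
        = (E * c * (1 - φ * α * θ) + E * s * (φ * β * θ)) * (2 * β + T3 * θ) := by
      rw [hψ, hT3]
      linear_combination (α * (1 - θ) + α * θ * E * c - β * θ * E * s
        - lam * (θ * L + 1 - θ)) * e1 + e2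
    exact mul_right_cancel₀ hden key
  -- the real eigenvalue identity
  have hlam : ψ + φ * lam * (1 - θ) = L * (1 - φ * lam * θ) := by
    rw [hψ]; ring
  -- complex exponential computations
  have hexp : ∀ x y : ℝ, Complex.exp (((x : ℂ) + (y : ℂ) * Complex.I) * (h : ℂ))
      = (exp (x * h) : ℂ) * ((cos (y * h) : ℂ) + (sin (y * h) : ℂ) * Complex.I) := by
    intro x y
    rw [show ((x : ℂ) + (y : ℂ) * Complex.I) * (h : ℂ)
        = ((x * h : ℝ) : ℂ) + ((y * h : ℝ) : ℂ) * Complex.I by push_cast; ring,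
      Complex.exp_add, Complex.exp_mul_I, ← Complex.ofReal_exp, ← Complex.ofReal_cos,
      ← Complex.ofReal_sin]
  rintro μ (rfl | rfl | rfl)
  · rw [hexp α β, ← hE, ← hc, ← hs]
    have hreC := congrArg (Complex.ofReal) hre
    have himC := congrArg (Complex.ofReal) him
    push_cast at hreC himC
    linear_combination hreC + Complex.I * himC + ((E : ℂ) * s * φ * β * θ) * Complex.I_sq
  · rw [show (α : ℂ) - (β : ℂ) * Complex.I = ((α : ℝ) : ℂ) + ((-β : ℝ) : ℂ) * Complex.I from by
      rw [Complex.ofReal_neg]; ring, hexp α (-β)]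
    rw [show (-β) * h = -(β * h) by ring, Real.cos_neg, Real.sin_neg, ← hE, ← hc, ← hs]
    have hreC := congrArg (Complex.ofReal) hre
    have himC := congrArg (Complex.ofReal) him
    push_cast at hreC himC ⊢
    linear_combination hreC - Complex.I * himC + ((E : ℂ) * s * φ * β * θ) * Complex.I_sq
  · rw [show (lam : ℂ) * (h : ℂ) = ((lam * h : ℝ) : ℂ) by push_cast; ring, ← Complex.ofReal_exp, ← hL]
    have hlamC := congrArg (Complex.ofReal) hlam
    push_cast at hlamC
    linear_combination hlamC
end

section
/- Let h > 0 and let λ₁, λ₂ be real numbers with λ₁ ≠ λ₂ and λ₁ ≠ 0. Write e₁ = e^{λ₁h}, e₂ = e^{λ₂h}, and set a = he₁λ₁² − λ₁λ₂(e₁ − e₂)/(λ₁ − λ₂), b = 2he₁λ₁ + (λ₁ + λ₂)(e₂ − e₁)/(λ₁ − λ₂), c = he₁ − (e₁ − e₂)/(λ₁ − λ₂). Then the discriminant satisfies b² − 4ac = (e₁ − e₂)², and if a ≠ 0 then T₁ = (b − (e₁ − e₂))/(2a) and T₂ = (b + (e₁ − e₂))/(2a) are the two roots of the quadratic equation aT²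 − bT + c = 0, i.e. aT₁² − bT₁ + c = 0 and aT₂² − bT₂ + c = 0. -/
/-- The quadratic (26) for `T = φθ` has discriminant `(e₁ − e₂)²` and,
when its leading coefficient is nonzero, its two roots are `T₁` and `T₂` of (27)-(28). -/
theorem quadratic_for_T_roots
    (h l1 l2 : ℝ) (hh : 0 < h) (h12 : l1 ≠ l2) (h1 : l1 ≠ 0)
    (e1 e2 a b c : ℝ)
    (he1 : e1 = Real.exp (l1 * h)) (he2 : e2 = Real.exp (l2 * h))
    (ha : a = h * e1 * l1 ^ 2 - l1 * l2 * (e1 - e2) / (l1 - l2))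
    (hb : b = 2 * h * e1 * l1 + (l1 + l2) * (e2 - e1) / (l1 - l2))
    (hc : c = h * e1 - (e1 - e2) / (l1 - l2)) :
    b ^ 2 - 4 * a * c = (e1 - e2) ^ 2 ∧
    (a ≠ 0 →
      a * ((b - (e1 - e2)) / (2 * a)) ^ 2 - b * ((b - (e1 - e2)) / (2 * a)) + c = 0 ∧
      a * ((b + (e1 - e2)) / (2 * a)) ^ 2 - b * ((b + (e1 - e2)) / (2 * a)) + c = 0) := by
  have hd : l1 - l2 ≠ 0 := sub_ne_zero.mpr h12
  have hdisc : b ^ 2 - 4 * a * c = (e1 - e2) ^ 2 := by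
    subst ha hb hc
    field_simp
    ring
  refine ⟨hdisc, fun haz => ?_⟩
  constructor <;>
  · field_simp
    nlinarith [hdisc, sq_nonneg a, sq_nonneg (e1 - e2)]
end

section
/- Let λ₁, λ₂ be real numbers with λ₁ ≠ λ₂ and λ₁ ≠ 0. For h > 0 define e₁(h) = e^{λ₁h}, e₂(h) = e^{λ₂h}, a(h) = he₁λ₁² − λ₁λ₂(e₁ − e₂)/(λ₁ − λ₂), b(h) = 2he₁λ₁ + (λ₁ + λ₂)(e₂ − e₁)/(λ₁ − λ₂), T₁(h) = (b(h) − (e₁ − e₂))/(2a(h)) and T₂(h) = (b(h) + (e₁ − e₂))/(2a(h)). Then λ₁T₁(h) tends to 0 and λ₁T₂(h) tends to 1 as h tends to 0 from the right. -/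
/-!
Every quantity in the statement is a linear combination of `u(h) = h e^{λ₁h}` and the divided
difference `D(h) = (e^{λ₁h} - e^{λ₂h}) / (λ₁ - λ₂)`. Both vanish at `0` with derivative `1`, so a
quotient `(p u + q D) / (r u + s D)` tends to `(p + q) / (r + s)`. For `λ₁ T₁` and `λ₁ T₂` this
gives `λ₁ · 0 = 0` and `λ₁ · (λ₁ - λ₂) / (λ₁ (λ₁ - λ₂)) = 1`.
-/

open Real Filter Topology

section LHopital

variable {𝕜 : Type*} [NontriviallyNormedField 𝕜]

theorem tendsto_div_nhdsNE_of_hasDerivAt {f g : 𝕜 → 𝕜} {a b x : 𝕜}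
    (hf : HasDerivAt f a x) (hg : HasDerivAt g b x) (hfx : f x = 0) (hgx : g x = 0)
    (hb : b ≠ 0) : Tendsto (fun y => f y / g y) (𝓝[≠] x) (𝓝 (a / b)) := by
  refine (hf.tendsto_slope.div hg.tendsto_slope hb).congr' ?_
  filter_upwards [self_mem_nhdsWithin] with y hy
  have hyx : y - x ≠ 0 := sub_ne_zero.mpr hy
  simp only [Pi.div_apply, slope_def_field, hfx, hgx, sub_zero]
  rw [div_div_div_cancel_right₀ hyx]

theorem tendsto_linear_comb_div_linear_comb {u v : 𝕜 → 𝕜} {x : 𝕜}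
    (hu : HasDerivAt u 1 x) (hv : HasDerivAt v 1 x) (hux : u x = 0) (hvx : v x = 0)
    (p q r s : 𝕜) (hrs : r + s ≠ 0) :
    Tendsto (fun y => (p * u y + q * v y) / (r * u y + s * v y)) (𝓝[≠] x)
      (𝓝 ((p + q) / (r + s))) := by
  have hnum := (hu.const_mul p).add (hv.const_mul q)
  have hden := (hu.const_mul r).add (hv.const_mul s)
  simp only [mul_one] at hnum hden
  exact tendsto_div_nhdsNE_of_hasDerivAt hnum hden (by simp [hux, hvx]) (by simp [hux, hvx]) hrs

end LHopital

theorem hasDerivAt_mul_exp_const_mul_zero (c : ℝ) :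
    HasDerivAt (fun h => h * exp (c * h)) 1 0 := by
  simpa using (hasDerivAt_id' (0 : ℝ)).fun_mul ((hasDerivAt_id (0 : ℝ)).const_mul c).exp

theorem hasDerivAt_exp_sub_exp_div_sub_zero {c d : ℝ} (hcd : c ≠ d) :
    HasDerivAt (fun h => (exp (c * h) - exp (d * h)) / (c - d)) 1 0 := by
  have hexp : ∀ k : ℝ, HasDerivAt (fun h => exp (k * h)) k 0 := fun k => by
    simpa using ((hasDerivAt_id (0 : ℝ)).const_mul k).exp
  simpa [sub_ne_zero.mpr hcd] using ((hexp c).sub (hexp d)).div_const (c - d)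

open Real Filter in
/-- Proposition 1: For the two roots `T₁(h)`, `T₂(h)` of the quadratic (26),
`λ₁T₁(h) → 0` and `λ₁T₂(h) → 1` as `h → 0⁺`. -/
theorem limits_of_quadratic_roots
    (l1 l2 : ℝ) (h12 : l1 ≠ l2) (h1 : l1 ≠ 0) :
    Tendsto (fun h : ℝ => l1 *
        (((2 * h * exp (l1 * h) * l1 + (l1 + l2) * (exp (l2 * h) - exp (l1 * h)) / (l1 - l2))
            - (exp (l1 * h) - exp (l2 * h))) /
          (2 * (h * exp (l1 * h) * l1 ^ 2 - l1 * l2 * (exp (l1 * h) - exp (l2 * h)) / (l1 - l2)))))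
      (nhdsWithin 0 (Set.Ioi 0)) (nhds 0) ∧
    Tendsto (fun h : ℝ => l1 *
        (((2 * h * exp (l1 * h) * l1 + (l1 + l2) * (exp (l2 * h) - exp (l1 * h)) / (l1 - l2))
            + (exp (l1 * h) - exp (l2 * h))) /
          (2 * (h * exp (l1 * h) * l1 ^ 2 - l1 * l2 * (exp (l1 * h) - exp (l2 * h)) / (l1 - l2)))))
      (nhdsWithin 0 (Set.Ioi 0)) (nhds 1) := by
  have hne : l1 - l2 ≠ 0 := sub_ne_zero.mpr h12
  have hden : 2 * l1 ^ 2 + -(2 * l1 * l2) ≠ 0 := by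
    rw [show 2 * l1 ^ 2 + -(2 * l1 * l2) = 2 * l1 * (l1 - l2) by ring]
    positivity
  have lim (p q : ℝ) := ((tendsto_linear_comb_div_linear_comb
    (hasDerivAt_mul_exp_const_mul_zero l1) (hasDerivAt_exp_sub_exp_div_sub_zero h12)
    (by simp) (by simp) p q (2 * l1 ^ 2) (-(2 * l1 * l2)) hden).mono_left
    (nhdsGT_le_nhdsNE 0)).const_mul l1
  constructor
  · convert lim (2 * l1) (-(2 * l1)) using 2
    · field_simp
      ring
    · ring
  · convert lim (2 * l1) (-(2 * l2)) using 2
    · field_simp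
      ring
    · rw [eq_comm, mul_div_assoc', div_eq_one_iff_eq hden]
      ring
end

section
/- Let h > 0 and let λ₁, λ₂ be real numbers with λ₁ ≠ λ₂ and λ₁ ≠ 0. Write e₁ = e^{λ₁h}, e₂ = e^{λ₂h}. Assume a := he₁λ₁² − λ₁λ₂(e₁ − e₂)/(λ₁ − λ₂) ≠ 0 and set T₁ = (b − (e₁ − e₂))/(2a) with b := 2he₁λ₁ + (λ₁ + λ₂)(e₂ − e₁)/(λ₁ − λ₂). Define ψ = 1 + [λ₁(e₂ − 1) − λ₂(e₁ − 1) + λ₁λ₂(e₁ − e₂)T₁]/(λ₁ − λ₂) and φ = [e₁ − e₂ + (λ₂(e₂ − 1) − λ₁(e₁ − 1))T₁]/(λ₁ − λ₂); assume φ ≠ 0 and set θ = T₁/φ. Then: ψ + φλ₁(1 − θ) = e₁(1 − φλ₁θ); ψ + φλ₂(1 − θ) = e₂(1 − φλ₂θ); and φ(1 − θ + ψθ) = he₁(1 − φλ₁θ)². -/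
/-- For eigenvalues `λ₁, λ₁, λ₂` (`λ₁ ≠ λ₂`, `λ₁ ≠ 0`, Jordan case `J₃`),
the parameters (29) built from the root `T₁` satisfy the three exactness conditions (23). -/
theorem implicit_params_jordan_J3
    (h l1 l2 : ℝ) (hh : 0 < h) (h12 : l1 ≠ l2) (h1 : l1 ≠ 0)
    (e1 e2 a b T1 ψ φ θ : ℝ)
    (he1 : e1 = Real.exp (l1 * h)) (he2 : e2 = Real.exp (l2 * h))
    (ha : a = h * e1 * l1 ^ 2 - l1 * l2 * (e1 - e2) / (l1 - l2)) (hane : a ≠ 0)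
    (hb : b = 2 * h * e1 * l1 + (l1 + l2) * (e2 - e1) / (l1 - l2))
    (hT1 : T1 = (b - (e1 - e2)) / (2 * a))
    (hψ : ψ = 1 + (l1 * (e2 - 1) - l2 * (e1 - 1) + l1 * l2 * (e1 - e2) * T1) / (l1 - l2))
    (hφ : φ = (e1 - e2 + (l2 * (e2 - 1) - l1 * (e1 - 1)) * T1) / (l1 - l2))
    (hφne : φ ≠ 0) (hθ : θ = T1 / φ) :
    ψ + φ * l1 * (1 - θ) = e1 * (1 - φ * l1 * θ) ∧
    ψ + φ * l2 * (1 - θ) = e2 * (1 - φ * l2 * θ) ∧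
    φ * (1 - θ + ψ * θ) = h * e1 * (1 - φ * l1 * θ) ^ 2 := by
  have hl : l1 - l2 ≠ 0 := sub_ne_zero.mpr h12
  have hφθ : φ * θ = T1 := by rw [hθ]; field_simp
  have hψ' : ψ * (l1 - l2) =
      (l1 - l2) + (l1 * (e2 - 1) - l2 * (e1 - 1) + l1 * l2 * (e1 - e2) * T1) := by
    rw [hψ]; field_simp
  have hφ' : φ * (l1 - l2) = e1 - e2 + (l2 * (e2 - 1) - l1 * (e1 - 1)) * T1 := by
    rw [hφ]; field_simp
  have hT1' : T1 * (2 * a) = b - (e1 - e2) := by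
    rw [hT1]; field_simp
  have haL : a * (l1 - l2) = h * e1 * l1 ^ 2 * (l1 - l2) - l1 * l2 * (e1 - e2) := by
    rw [ha]; field_simp
  have hbL : b * (l1 - l2) = 2 * h * e1 * l1 * (l1 - l2) + (l1 + l2) * (e2 - e1) := by
    rw [hb]; field_simp
  have hab : (b ^ 2 - (e1 - e2) ^ 2) * (l1 - l2) =
      4 * a * (h * e1 * (l1 - l2) - (e1 - e2)) := by
    rw [ha, hb]; field_simp; ring
  have hquad : a * T1 ^ 2 * (4 * a) - b * T1 * (4 * a) = (e1 - e2) ^ 2 - b ^ 2 := by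
    linear_combination (T1 * (2 * a) - (b + (e1 - e2))) * hT1'
  have hquad2 : (a * T1 ^ 2 - b * T1) * (l1 - l2) * (4 * a) =
      -(4 * a * (h * e1 * (l1 - l2) - (e1 - e2))) := by
    linear_combination (l1 - l2) * hquad - hab
  refine ⟨?_, ?_, ?_⟩
  · apply mul_right_cancel₀ hl
    linear_combination hψ' + l1 * hφ' + (e1 * l1 - l1) * (l1 - l2) * hφθ
  · apply mul_right_cancel₀ hl
    linear_combination hψ' + l2 * hφ' + (e2 * l2 - l2) * (l1 - l2) * hφθ
  · have hLa : (l1 - l2) * (4 * a) ≠ 0 := by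
      exact mul_ne_zero hl (by simpa using hane)
    apply mul_right_cancel₀ hLa
    linear_combination 4 * a * hφ' + 4 * a * (φ * θ) * hψ' +
      (4 * a * (l1 * (e2 - 1) - l2 * (e1 - 1) + l1 * l2 * (e1 - e2) * T1) +
        8 * a * (l1 - l2) * (h * e1) * l1 -
        4 * a * (l1 - l2) * (h * e1) * l1 ^ 2 * (φ * θ + T1)) * hφθ - hquad2 +
      4 * a * T1 ^ 2 * haL - 4 * a * T1 * hbL
end

section
/- Let h > 0 and let λ₂ be a nonzero real number. Set ψ = 1, φ = h and θ = (e^{λ₂h} − λ₂h − 1)/(λ₂h(e^{λ₂h} − 1)). Then: ψ + φλ₂(1 − θ) = e^{λ₂h}(1 − φλ₂θ); ψ = 1 (so the condition for the zero eigenvalue, ψ + φ·0·(1−θ) = e^{0}(1 − φ·0·θ), holds); and φ(1 − θ + ψθ) = he^{0·h}(1 − φ·0·θ)², i.e. φ(1 − θ + ψθ) = h. -/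
/-! With `ψ = 1` and `φ = h`, the scheme applied to the eigenvalue `λ` multiplies by
`(1 + x (1 - θ)) / (1 - x θ)` per step, where `x = λ h`. Exactness for `λ₂` asks this to be
`e^x`, a linear equation in `θ` whose solution is the given `θ`; since `e^x ≠ 1` for `x ≠ 0`
it can be checked by clearing denominators. For the eigenvalue `0` both conditions
reduce to `ψ = 1` and `φ = h`. -/

open Real

theorem one_add_mul_one_sub_eq_exp_mul_one_sub {x θ : ℝ} (hx : x ≠ 0)
    (hθ : θ = (exp x - x - 1) / (x * (exp x - 1))) :
    1 + x * (1 - θ) = exp x * (1 - x * θ) := by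
  have hexp : exp x - 1 ≠ 0 := sub_ne_zero.2 (mt (exp_eq_one_iff x).1 hx)
  subst hθ
  field_simp
  ring

/-- For eigenvalues `0, 0, λ₂` (Jordan case `J₃` with `λ₁ = 0`), the
parameters (p1) satisfy the three exactness conditions. -/
theorem implicit_params_jordan_J3_zero_case
    (h l2 : ℝ) (hh : 0 < h) (hl2 : l2 ≠ 0)
    (ψ φ θ : ℝ) (hψ : ψ = 1) (hφ : φ = h)
    (hθ : θ = (Real.exp (l2 * h) - l2 * h - 1) / (l2 * h * (Real.exp (l2 * h) - 1))) :
    ψ + φ * l2 * (1 - θ) = Real.exp (l2 * h) * (1 - φ * l2 * θ) ∧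
    ψ + φ * 0 * (1 - θ) = Real.exp 0 * (1 - φ * 0 * θ) ∧
    φ * (1 - θ + ψ * θ) = h * Real.exp (0 * h) * (1 - φ * 0 * θ) ^ 2 ∧
    φ * (1 - θ + ψ * θ) = h := by
  subst ψ φ
  refine ⟨?_, by simp, by simp, by ring⟩
  simpa only [mul_comm h l2] using
    one_add_mul_one_sub_eq_exp_mul_one_sub (mul_ne_zero hl2 hh.ne') hθ
end

section
/- Let ψ, φ, θ, h, λ₁, λ₂ be real numbers with φλ₁θ ≠ 1 and φλ₂θ ≠ 1, satisfying the three conditions: ψ + φλ₁(1 − θ) = e^{λ₁h}(1 − φλ₁θ); ψ + φλ₂(1 − θ) = e^{λ₂h}(1 − φλ₂θ); and φ(1 − θ + ψθ) = he^{λ₁h}(1 − φλ₁θ)². Then every triple of sequences x, y, z : ℕ → ℝ satisfying, for all k, x_{k+1} − ψx_k = φ[θ(λ₁x_{k+1} + y_{k+1}) + (1 − θ)(λ₁x_k + y_k)], y_{k+1} − ψy_k = φλ₁[θy_{k+1} + (1 − θ)y_k], and z_{k+1} − ψz_k = φλ₂[θz_{k+1} + (1 − θ)z_k], also satisfies, for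 all k: x_{k+1} = (x_k + h y_k)e^{λ₁h}, y_{k+1} = y_k e^{λ₁h}, z_{k+1} = z_k e^{λ₂h}. -/
/-- If the parameters satisfy the three conditions (23), then any solution
of the implicit scheme for the Jordan system `x' = J₃x` coincides with the exact solution
at grid points. -/
theorem implicit_scheme_exact_jordan_J3
    (ψ φ θ h l1 l2 : ℝ) (h1 : φ * l1 * θ ≠ 1) (h2 : φ * l2 * θ ≠ 1)
    (c1 : ψ + φ * l1 * (1 - θ) = Real.exp (l1 * h) * (1 - φ * l1 * θ))
    (c2 : ψ + φ * l2 * (1 - θ) = Real.exp (l2 * h) * (1 - φ * l2 * θ))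
    (c3 : φ * (1 - θ + ψ * θ) = h * Real.exp (l1 * h) * (1 - φ * l1 * θ) ^ 2) :
    ∀ x y z : ℕ → ℝ,
      (∀ k, x (k + 1) - ψ * x k =
        φ * (θ * (l1 * x (k + 1) + y (k + 1)) + (1 - θ) * (l1 * x k + y k))) →
      (∀ k, y (k + 1) - ψ * y k = φ * l1 * (θ * y (k + 1) + (1 - θ) * y k)) →
      (∀ k, z (k + 1) - ψ * z k = φ * l2 * (θ * z (k + 1) + (1 - θ) * z k)) →
      ∀ k, x (k + 1) = (x k + h * y k) * Real.exp (l1 * h) ∧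
        y (k + 1) = y k * Real.exp (l1 * h) ∧
        z (k + 1) = z k * Real.exp (l2 * h) := by
  intro x y z hx hy hz k
  have A : (1 - φ * l1 * θ) ≠ 0 := fun h' => h1 (by linarith [sub_eq_zero.mp h'])
  have B : (1 - φ * l2 * θ) ≠ 0 := fun h' => h2 (by linarith [sub_eq_zero.mp h'])
  set e1 := Real.exp (l1 * h) with he1
  set e2 := Real.exp (l2 * h) with he2
  have key : φ * (1 - θ + θ * e1) = h * e1 * (1 - φ * l1 * θ) :=
    mul_right_cancel₀ A (by linear_combination c3 - φ * θ * c1)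
  have hy' : y (k + 1) = y k * e1 :=
    mul_right_cancel₀ A (by linear_combination hy k + y k * c1)
  have hz' : z (k + 1) = z k * e2 :=
    mul_right_cancel₀ B (by linear_combination hz k + z k * c2)
  have hx' : x (k + 1) = (x k + h * y k) * e1 :=
    mul_right_cancel₀ A (by
      linear_combination hx k + x k * c1 + φ * θ * hy' + y k * key)
  exact ⟨hx', hy', hz'⟩
end

section
/- Let λ be a real number and h a real number with λh ≠ −2. Set ψ = e^{λh}(2 − λh)/(λh + 2), φ = h(e^{λh} + 1)/(λh + 2) and θ = 1/(e^{λh} + 1). Then: ψ + φλ(1 − θ) = e^{λh}(1 − φλθ); φ(1 − θ + ψθ) = he^{λh}(1 − φλθ)²; and φ²θ(1 − θ + ψθ) = (h²/2)e^{λh}(1 − φλθ)³. In particular, when λ = 0 these parameters reduce to ψ = 1, φ = h, θ = 1/2. -/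
/-!
Write `E = e^{λh}` and `z = λh`. The parameters are chosen so that
`1 - φλθ = 2 / (z + 2)`, `φθ = h / (z + 2)` and `1 - θ + ψθ = 4E / ((z + 2)(E + 1))`.
With these three values each exactness condition becomes an identity of rational functions
in `z`, `h`, `E`; the third one is the second multiplied by `φθ = h / (z + 2)`. Nothing about
the exponential is used except `E + 1 ≠ 0`.
-/

namespace JordanJ6

variable {lam h E ψ φ θ : ℝ}

theorem phi_mul_theta (hE : E + 1 ≠ 0)
    (hφ : φ = h * (E + 1) / (lam * h + 2)) (hθ : θ = 1 / (E + 1)) :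
    φ * θ = h / (lam * h + 2) := by
  subst hφ hθ
  field_simp

theorem one_sub_phi_mul_lam_mul_theta (hz : lam * h + 2 ≠ 0) (hE : E + 1 ≠ 0)
    (hφ : φ = h * (E + 1) / (lam * h + 2)) (hθ : θ = 1 / (E + 1)) :
    1 - φ * lam * θ = 2 / (lam * h + 2) := by
  calc 1 - φ * lam * θ = 1 - lam * (φ * θ) := by ring
    _ = 2 / (lam * h + 2) := by
      rw [phi_mul_theta hE hφ hθ]
      field_simp
      ring

theorem one_sub_theta_add_psi_mul_theta (hz : lam * h + 2 ≠ 0) (hE : E + 1 ≠ 0)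
    (hψ : ψ = E * (2 - lam * h) / (lam * h + 2)) (hθ : θ = 1 / (E + 1)) :
    1 - θ + ψ * θ = 4 * E / ((lam * h + 2) * (E + 1)) := by
  subst hψ hθ
  field_simp
  ring

variable (hz : lam * h + 2 ≠ 0) (hE : E + 1 ≠ 0)
  (hψ : ψ = E * (2 - lam * h) / (lam * h + 2))
  (hφ : φ = h * (E + 1) / (lam * h + 2)) (hθ : θ = 1 / (E + 1))
include hz hE hψ hφ hθ

theorem first_exactness_condition : ψ + φ * lam * (1 - θ) = E * (1 - φ * lam * θ) := by
  rw [one_sub_phi_mul_lam_mul_theta hz hE hφ hθ]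
  subst hψ hφ hθ
  field_simp
  ring

theorem second_exactness_condition : φ * (1 - θ + ψ * θ) = h * E * (1 - φ * lam * θ) ^ 2 := by
  rw [one_sub_phi_mul_lam_mul_theta hz hE hφ hθ, one_sub_theta_add_psi_mul_theta hz hE hψ hθ, hφ]
  field_simp
  ring

theorem third_exactness_condition :
    φ ^ 2 * θ * (1 - θ + ψ * θ) = h ^ 2 / 2 * E * (1 - φ * lam * θ) ^ 3 := by
  calc φ ^ 2 * θ * (1 - θ + ψ * θ) = φ * θ * (φ * (1 - θ + ψ * θ)) := by ring
    _ = h / (lam * h + 2) * (h * E * (2 / (lam * h + 2)) ^ 2) := by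
      rw [phi_mul_theta hE hφ hθ, second_exactness_condition hz hE hψ hφ hθ,
        one_sub_phi_mul_lam_mul_theta hz hE hφ hθ]
    _ = h ^ 2 / 2 * E * (1 - φ * lam * θ) ^ 3 := by
      rw [one_sub_phi_mul_lam_mul_theta hz hE hφ hθ]
      field_simp

end JordanJ6

/-- For the triple eigenvalue `λ` (Jordan case `J₆`), the parameters (41)
satisfy the three exactness conditions (40); for `λ = 0` they reduce to
`ψ = 1, φ = h, θ = 1/2`. -/
theorem implicit_params_jordan_J6
    (lam h : ℝ) (hne : lam * h ≠ -2)
    (ψ φ θ : ℝ)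
    (hψ : ψ = Real.exp (lam * h) * (2 - lam * h) / (lam * h + 2))
    (hφ : φ = h * (Real.exp (lam * h) + 1) / (lam * h + 2))
    (hθ : θ = 1 / (Real.exp (lam * h) + 1)) :
    ψ + φ * lam * (1 - θ) = Real.exp (lam * h) * (1 - φ * lam * θ) ∧
    φ * (1 - θ + ψ * θ) = h * Real.exp (lam * h) * (1 - φ * lam * θ) ^ 2 ∧
    φ ^ 2 * θ * (1 - θ + ψ * θ) = h ^ 2 / 2 * Real.exp (lam * h) * (1 - φ * lam * θ) ^ 3 ∧
    (lam = 0 → ψ = 1 ∧ φ = h ∧ θ = 1 / 2) := by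
  have hz : lam * h + 2 ≠ 0 := fun h0 => hne (by linarith)
  have hE : Real.exp (lam * h) + 1 ≠ 0 := by positivity
  refine ⟨JordanJ6.first_exactness_condition hz hE hψ hφ hθ,
    JordanJ6.second_exactness_condition hz hE hψ hφ hθ,
    JordanJ6.third_exactness_condition hz hE hψ hφ hθ, fun hlam => ?_⟩
  subst hlam
  norm_num [hψ, hφ, hθ]
end

section
/- Let ψ, φ, θ, h, λ be real numbers with φλθ ≠ 1, satisfying the three conditions: ψ + φλ(1 − θ) = e^{λh}(1 − φλθ); φ(1 − θ + ψθ) = he^{λh}(1 − φλθ)²; and φ²θ(1 − θ + ψθ) = (h²/2)e^{λh}(1 − φλθ)³. Then every triple of sequences x, y, z : ℕ → ℝ satisfying, for all k, x_{k+1} − ψx_k = φ[θ(λx_{k+1} + y_{k+1}) + (1 − θ)(λx_k + y_k)], y_{k+1} − ψy_k = φ[θ(λy_{k+1} + z_{k+1}) + (1 − θ)(λy_k + z_k)], and z_{k+1} − ψz_k = φλ[θz_{k+1} + (1 − θ)z_k], also satisfies, for all k: x_{k+1} = (x_k + h y_k + (h²/2) z_k)e^{λh}, y_{k+1} = (y_k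 + h z_k)e^{λh}, z_{k+1} = z_k e^{λh}. -/
/-- If the parameters satisfy the three conditions (40), then any solution
of the implicit scheme for the Jordan system `x' = J₆x` coincides with the exact solution
at grid points. -/
theorem implicit_scheme_exact_jordan_J6
    (ψ φ θ h lam : ℝ) (h1 : φ * lam * θ ≠ 1)
    (c1 : ψ + φ * lam * (1 - θ) = Real.exp (lam * h) * (1 - φ * lam * θ))
    (c2 : φ * (1 - θ + ψ * θ) = h * Real.exp (lam * h) * (1 - φ * lam * θ) ^ 2)
    (c3 : φ ^ 2 * θ * (1 - θ + ψ * θ) =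
      h ^ 2 / 2 * Real.exp (lam * h) * (1 - φ * lam * θ) ^ 3) :
    ∀ x y z : ℕ → ℝ,
      (∀ k, x (k + 1) - ψ * x k =
        φ * (θ * (lam * x (k + 1) + y (k + 1)) + (1 - θ) * (lam * x k + y k))) →
      (∀ k, y (k + 1) - ψ * y k =
        φ * (θ * (lam * y (k + 1) + z (k + 1)) + (1 - θ) * (lam * y k + z k))) →
      (∀ k, z (k + 1) - ψ * z k = φ * lam * (θ * z (k + 1) + (1 - θ) * z k)) →
      ∀ k, x (k + 1) = (x k + h * y k + h ^ 2 / 2 * z k) * Real.exp (lam * h) ∧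
        y (k + 1) = (y k + h * z k) * Real.exp (lam * h) ∧
        z (k + 1) = z k * Real.exp (lam * h) := by
  intro x y z hx hy hz k
  set E := Real.exp (lam * h) with hEdef
  set D := 1 - φ * lam * θ with hDdef
  have hD : D ≠ 0 := by
    intro hc
    apply h1
    have : φ * lam * θ = 1 := by linarith [hc]
    exact this
  have hEpos : 0 < E := Real.exp_pos _
  have hEne : E ≠ 0 := ne_of_gt hEpos
  have hED2 : E * D ^ 2 ≠ 0 := by positivity
  -- key1 : φθE + φ(1-θ) = h E D
  have key1 : φ * θ * E + φ * (1 - θ) = h * E * D := by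
    have hm : (φ * θ * E + φ * (1 - θ)) * D = (h * E * D) * D := by
      linear_combination (-(φ * θ)) * c1 + c2
    exact mul_right_cancel₀ hD hm
  -- key2 : φθh = (h²/2) D
  have key2 : φ * θ * h = h ^ 2 / 2 * D := by
    have hm : (φ * θ * h) * (E * D ^ 2) = (h ^ 2 / 2 * D) * (E * D ^ 2) := by
      linear_combination c3 - φ * θ * c2
    exact mul_right_cancel₀ hED2 hm
  -- z step
  have hz' : z (k + 1) = z k * E := by
    have hm : z (k + 1) * D = (z k * E) * D := by
      linear_combination hz k + z k * c1
    exact mul_right_cancel₀ hD hm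
  -- y step
  have hy' : y (k + 1) = (y k + h * z k) * E := by
    have hm : y (k + 1) * D = ((y k + h * z k) * E) * D := by
      linear_combination hy k + y k * c1 + φ * θ * hz' + z k * key1
    exact mul_right_cancel₀ hD hm
  -- x step
  have hx' : x (k + 1) = (x k + h * y k + h ^ 2 / 2 * z k) * E := by
    have hm : x (k + 1) * D = ((x k + h * y k + h ^ 2 / 2 * z k) * E) * D := by
      linear_combination hx k + x k * c1 + φ * θ * hy' + y k * key1 + z k * E * key2
    exact mul_right_cancel₀ hD hm
  exact ⟨hx', hy', hz'⟩
end

section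
/- Let λ₁, λ₂, λ₃ be pairwise distinct real numbers. For h > 0 write eᵢ(h) = e^{λᵢh} and define T₁(h) = λ₁(e₂ − e₃) + λ₂(e₃ − e₁) + λ₃(e₁ − e₂), T₂(h) = λ₁(1 − e₁)(e₂ − e₃) + λ₂(1 − e₂)(e₃ − e₁) + λ₃(1 − e₃)(e₁ − e₂), θ(h) = T₁(h)/T₂(h), C₁(h) = λ₂ − λ₁ + λ₁e₁ − λ₂e₂, φ(h) = (e₁ − e₂)/(λ₁ − λ₂ + θ(h)C₁(h)), and ψ(h) = e₃ − φ(h)λ₃(e₃θ(h) + 1 − θ(h)). Then, as h tends to 0 from the right: ψ(h) tends to 1, φ(h)/h tends to 1, and θ(h) tends to 1/2. -/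
/-!
Both `T₁` and `T₂` are combinations `∑ wᵢ exp (cᵢ h)` (for `T₂` after expanding
`eᵢ eⱼ = exp ((λᵢ + λⱼ) h)`) whose Taylor coefficients of orders `0` and `1` vanish, so
`T₁ ~ V h² / 2` and `T₂ ~ V h²` with `V = (λ₁ - λ₂)(λ₂ - λ₃)(λ₃ - λ₁) ≠ 0`; hence `θ → 1/2`.
Since `C₁ → 0` and `(e₁ - e₂) / h → λ₁ - λ₂ ≠ 0`, this gives `φ / h → 1`, so `φ → 0` and `ψ → 1`.
-/

open Real Filter Topology Finset

lemma tendsto_exp_mul_sub_one_div (a : ℝ) :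
    Tendsto (fun x => (exp (a * x) - 1) / x) (𝓝[≠] 0) (𝓝 a) := by
  simpa [div_eq_inv_mul] using ((hasDerivAt_id (0 : ℝ)).const_mul a).exp.tendsto_slope_zero

lemma tendsto_exp_mul_sub_one_sub_mul_div_sq (a : ℝ) :
    Tendsto (fun x => (exp (a * x) - 1 - a * x) / x ^ 2) (𝓝[≠] 0) (𝓝 (a ^ 2 / 2)) := by
  have hf (x : ℝ) : HasDerivAt (fun x => exp (a * x) - 1 - a * x) (a * (exp (a * x) - 1)) x := by
    have hlin : HasDerivAt (fun x => a * x) a x := by simpa using (hasDerivAt_id x).const_mul a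
    exact ((hlin.exp.sub_const 1).sub hlin).congr_deriv (by ring)
  have hg (x : ℝ) : HasDerivAt (fun x => x ^ 2) (2 * x) x := by
    simpa using hasDerivAt_pow 2 x
  refine HasDerivAt.lhopital_zero_nhdsNE (.of_forall hf) (.of_forall hg) ?_ ?_ ?_ ?_
  · filter_upwards [self_mem_nhdsWithin] with x (hx : x ≠ 0)
    exact mul_ne_zero two_ne_zero hx
  · simpa using (hf 0).continuousAt.tendsto.mono_left nhdsWithin_le_nhds
  · simpa using (hg 0).continuousAt.tendsto.mono_left nhdsWithin_le_nhds
  · have := (tendsto_exp_mul_sub_one_div a).const_mul (a / 2)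
    rw [show a / 2 * a = a ^ 2 / 2 by ring] at this
    refine this.congr' ?_
    filter_upwards [self_mem_nhdsWithin] with x (hx : x ≠ 0)
    field_simp

lemma tendsto_sum_mul_exp_div_sq {ι : Type*} (s : Finset ι) (w c : ι → ℝ)
    (hw : ∑ i ∈ s, w i = 0) (hwc : ∑ i ∈ s, w i * c i = 0) :
    Tendsto (fun x => (∑ i ∈ s, w i * exp (c i * x)) / x ^ 2) (𝓝[≠] 0)
      (𝓝 ((∑ i ∈ s, w i * c i ^ 2) / 2)) := by
  have hsum (x : ℝ) : (∑ i ∈ s, w i * exp (c i * x)) / x ^ 2 =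
      ∑ i ∈ s, w i * ((exp (c i * x) - 1 - c i * x) / x ^ 2) := by
    simp only [mul_div_assoc', ← sum_div, mul_sub, sum_sub_distrib, mul_one, hw,
      ← mul_assoc, ← sum_mul, hwc, zero_mul, sub_zero]
  simp only [hsum, sum_div, mul_div_assoc]
  exact tendsto_finsetSum _ fun i _ => (tendsto_exp_mul_sub_one_sub_mul_div_sq (c i)).const_mul _

noncomputable section

namespace ExactScheme

variable (l1 l2 l3 : ℝ)

def T₁ (h : ℝ) : ℝ :=
  l1 * (exp (l2 * h) - exp (l3 * h)) + l2 * (exp (l3 * h) - exp (l1 * h))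
    + l3 * (exp (l1 * h) - exp (l2 * h))

def T₂ (h : ℝ) : ℝ :=
  l1 * (1 - exp (l1 * h)) * (exp (l2 * h) - exp (l3 * h))
    + l2 * (1 - exp (l2 * h)) * (exp (l3 * h) - exp (l1 * h))
    + l3 * (1 - exp (l3 * h)) * (exp (l1 * h) - exp (l2 * h))

def θ (h : ℝ) : ℝ := T₁ l1 l2 l3 h / T₂ l1 l2 l3 h

def C₁ (h : ℝ) : ℝ := l2 - l1 + l1 * exp (l1 * h) - l2 * exp (l2 * h)

def φ (h : ℝ) : ℝ := (exp (l1 * h) - exp (l2 * h)) / (l1 - l2 + θ l1 l2 l3 h * C₁ l1 l2 h)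

def ψ (h : ℝ) : ℝ :=
  exp (l3 * h) - φ l1 l2 l3 h * l3 * (exp (l3 * h) * θ l1 l2 l3 h + 1 - θ l1 l2 l3 h)

theorem tendsto_T₁_div_sq :
    Tendsto (fun h => T₁ l1 l2 l3 h / h ^ 2) (𝓝[≠] 0)
      (𝓝 ((l1 - l2) * (l2 - l3) * (l3 - l1) / 2)) := by
  have := tendsto_sum_mul_exp_div_sq univ ![l3 - l2, l1 - l3, l2 - l1] ![l1, l2, l3]
    (by simp [Fin.sum_univ_three]) (by simp [Fin.sum_univ_three]; ring)
  convert this using 2 with h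
  · simp only [T₁, Fin.sum_univ_three, Matrix.cons_val]
    ring
  · simp only [Fin.sum_univ_three, Matrix.cons_val]
    ring

theorem tendsto_T₂_div_sq :
    Tendsto (fun h => T₂ l1 l2 l3 h / h ^ 2) (𝓝[≠] 0)
      (𝓝 ((l1 - l2) * (l2 - l3) * (l3 - l1))) := by
  have := tendsto_sum_mul_exp_div_sq univ
    ![l3 - l2, l1 - l3, l2 - l1, l2 - l1, l3 - l2, l1 - l3]
    ![l1, l2, l3, l1 + l2, l2 + l3, l3 + l1]
    (by simp [Fin.sum_univ_six]) (by simp [Fin.sum_univ_six]; ring)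
  convert this using 2 with h
  · simp only [T₂, Fin.sum_univ_six, Matrix.cons_val, add_mul, exp_add]
    ring
  · simp only [Fin.sum_univ_six, Matrix.cons_val]
    ring

variable {l1 l2 l3}

theorem tendsto_θ (h12 : l1 ≠ l2) (h13 : l1 ≠ l3) (h23 : l2 ≠ l3) :
    Tendsto (θ l1 l2 l3) (𝓝[≠] 0) (𝓝 (1 / 2)) := by
  have hV : (l1 - l2) * (l2 - l3) * (l3 - l1) ≠ 0 :=
    mul_ne_zero (mul_ne_zero (sub_ne_zero.2 h12) (sub_ne_zero.2 h23)) (sub_ne_zero.2 h13.symm)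
  have := (tendsto_T₁_div_sq l1 l2 l3).div (tendsto_T₂_div_sq l1 l2 l3) hV
  rw [div_div_cancel_left' hV, ← one_div] at this
  refine this.congr' ?_
  filter_upwards [self_mem_nhdsWithin] with h (hh : h ≠ 0)
  exact div_div_div_cancel_right₀ (pow_ne_zero 2 hh) _ _

theorem tendsto_φ_div (h12 : l1 ≠ l2) (h13 : l1 ≠ l3) (h23 : l2 ≠ l3) :
    Tendsto (fun h => φ l1 l2 l3 h / h) (𝓝[≠] 0) (𝓝 1) := by
  have hC₁ : Tendsto (C₁ l1 l2) (𝓝[≠] 0) (𝓝 0) :=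
    ((by unfold C₁; fun_prop : Continuous (C₁ l1 l2)).tendsto' 0 0 (by simp [C₁])).mono_left
      nhdsWithin_le_nhds
  have hden := (tendsto_θ h12 h13 h23).mul hC₁ |>.const_add (l1 - l2)
  have hnum := (tendsto_exp_mul_sub_one_div l1).sub (tendsto_exp_mul_sub_one_div l2)
  have := hnum.div hden (by simpa using sub_ne_zero.2 h12)
  rw [mul_zero, add_zero, div_self (sub_ne_zero.2 h12)] at this
  exact this.congr fun h => by simp only [φ, Pi.div_apply]; ring

theorem tendsto_ψ (h12 : l1 ≠ l2) (h13 : l1 ≠ l3) (h23 : l2 ≠ l3) :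
    Tendsto (ψ l1 l2 l3) (𝓝[≠] 0) (𝓝 1) := by
  have he₃ : Tendsto (fun h => exp (l3 * h)) (𝓝[≠] 0) (𝓝 1) :=
    ((by fun_prop : Continuous fun h => exp (l3 * h)).tendsto' 0 1 (by simp)).mono_left
      nhdsWithin_le_nhds
  have hφ : Tendsto (φ l1 l2 l3) (𝓝[≠] 0) (𝓝 0) := by
    have := (tendsto_φ_div h12 h13 h23).mul (tendsto_id.mono_left nhdsWithin_le_nhds)
    rw [one_mul] at this
    refine this.congr' ?_
    filter_upwards [self_mem_nhdsWithin] with h (hh : h ≠ 0)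
    exact div_mul_cancel₀ _ hh
  have hθ := tendsto_θ h12 h13 h23
  have := he₃.sub ((hφ.mul_const l3).mul (((he₃.mul hθ).const_add 1).sub hθ))
  convert this using 2
  · simp only [ψ]; ring
  · ring

end ExactScheme

end

open Real Filter in
/-- The parameters (12)-(13) of the exact scheme for three pairwise
distinct eigenvalues satisfy `ψ(h) → 1`, `φ(h)/h → 1`, `θ(h) → 1/2` as `h → 0⁺`. -/
theorem limits_params_three_distinct
    (l1 l2 l3 : ℝ) (h12 : l1 ≠ l2) (h13 : l1 ≠ l3) (h23 : l2 ≠ l3) :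
    Tendsto (fun h : ℝ =>
        let e1 := exp (l1 * h); let e2 := exp (l2 * h); let e3 := exp (l3 * h)
        let T1 := l1 * (e2 - e3) + l2 * (e3 - e1) + l3 * (e1 - e2)
        let T2 := l1 * (1 - e1) * (e2 - e3) + l2 * (1 - e2) * (e3 - e1)
          + l3 * (1 - e3) * (e1 - e2)
        let θ := T1 / T2
        let C1 := l2 - l1 + l1 * e1 - l2 * e2
        let φ := (e1 - e2) / (l1 - l2 + θ * C1)
        e3 - φ * l3 * (e3 * θ + 1 - θ))
      (nhdsWithin 0 (Set.Ioi 0)) (nhds 1) ∧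
    Tendsto (fun h : ℝ =>
        let e1 := exp (l1 * h); let e2 := exp (l2 * h); let e3 := exp (l3 * h)
        let T1 := l1 * (e2 - e3) + l2 * (e3 - e1) + l3 * (e1 - e2)
        let T2 := l1 * (1 - e1) * (e2 - e3) + l2 * (1 - e2) * (e3 - e1)
          + l3 * (1 - e3) * (e1 - e2)
        let θ := T1 / T2
        let C1 := l2 - l1 + l1 * e1 - l2 * e2
        let φ := (e1 - e2) / (l1 - l2 + θ * C1)
        φ / h)
      (nhdsWithin 0 (Set.Ioi 0)) (nhds 1) ∧
    Tendsto (fun h : ℝ =>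
        let e1 := exp (l1 * h); let e2 := exp (l2 * h); let e3 := exp (l3 * h)
        let T1 := l1 * (e2 - e3) + l2 * (e3 - e1) + l3 * (e1 - e2)
        let T2 := l1 * (1 - e1) * (e2 - e3) + l2 * (1 - e2) * (e3 - e1)
          + l3 * (1 - e3) * (e1 - e2)
        T1 / T2)
      (nhdsWithin 0 (Set.Ioi 0)) (nhds (1 / 2)) := by
  open ExactScheme in
  exact ⟨(tendsto_ψ h12 h13 h23).mono_left (nhdsGT_le_nhdsNE 0),
    (tendsto_φ_div h12 h13 h23).mono_left (nhdsGT_le_nhdsNE 0),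
    (tendsto_θ h12 h13 h23).mono_left (nhdsGT_le_nhdsNE 0)⟩
end

section
/- Let h > 0 and let λ₁, λ₂, λ₃ be pairwise distinct real numbers with λ₁ + λ₂ ≠ 0 and λ₃ ≠ 0. Write eᵢ = e^{λᵢh}. Assume D := λ₁λ₂(λ₂ − λ₁)(λ₃² − λ₂²) − λ₂λ₃(λ₃ − λ₂)(λ₂² − λ₁²) ≠ 0 and set φ = [(λ₃² − λ₂²)(λ₂²e₁ − λ₁²e₂) − (λ₂² − λ₁²)(λ₃²e₂ − λ₂²e₃)]/D; assume φ ≠ 0; set ψ = (λ₂²e₁ − λ₁²e₂ − λ₁λ₂(λ₂ − λ₁)φ)/(λ₂² − λ₁²) and θ = (e₃ − ψ − λ₃φ)/(λ₃²φ²). Then for each i ∈ {1, 2, 3}: ψ + φλᵢ + θφ²λᵢ² = e^{λᵢh}. -/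
/-- For three pairwise distinct eigenvalues with `λ₁ + λ₂ ≠ 0`, `λ₃ ≠ 0`,
the parameters of the explicit scheme given by (eeds1) satisfy the exactness conditions
`ψ + φλᵢ + θφ²λᵢ² = e^{λᵢh}` for each `i`. -/
theorem explicit_params_three_distinct
    (h l1 l2 l3 : ℝ) (hh : 0 < h)
    (h12 : l1 ≠ l2) (h13 : l1 ≠ l3) (h23 : l2 ≠ l3)
    (hsum : l1 + l2 ≠ 0) (hl3 : l3 ≠ 0)
    (e1 e2 e3 D φ ψ θ : ℝ)
    (he1 : e1 = Real.exp (l1 * h)) (he2 : e2 = Real.exp (l2 * h))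
    (he3 : e3 = Real.exp (l3 * h))
    (hD : D = l1 * l2 * (l2 - l1) * (l3 ^ 2 - l2 ^ 2)
      - l2 * l3 * (l3 - l2) * (l2 ^ 2 - l1 ^ 2))
    (hDne : D ≠ 0)
    (hφ : φ = ((l3 ^ 2 - l2 ^ 2) * (l2 ^ 2 * e1 - l1 ^ 2 * e2)
      - (l2 ^ 2 - l1 ^ 2) * (l3 ^ 2 * e2 - l2 ^ 2 * e3)) / D)
    (hφne : φ ≠ 0)
    (hψ : ψ = (l2 ^ 2 * e1 - l1 ^ 2 * e2 - l1 * l2 * (l2 - l1) * φ) / (l2 ^ 2 - l1 ^ 2))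
    (hθ : θ = (e3 - ψ - l3 * φ) / (l3 ^ 2 * φ ^ 2)) :
    ψ + φ * l1 + θ * φ ^ 2 * l1 ^ 2 = Real.exp (l1 * h) ∧
    ψ + φ * l2 + θ * φ ^ 2 * l2 ^ 2 = Real.exp (l2 * h) ∧
    ψ + φ * l3 + θ * φ ^ 2 * l3 ^ 2 = Real.exp (l3 * h) := by
  have hl2 : l2 ≠ 0 := by
    intro h0
    apply hDne
    rw [hD, h0]; ring
  have hQ : l2 ^ 2 - l1 ^ 2 ≠ 0 := by
    have : (l2 - l1) * (l2 + l1) ≠ 0 :=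
      mul_ne_zero (sub_ne_zero.mpr h12.symm) (by
        intro h0; apply hsum; linarith)
    intro h0; apply this; linarith [h0]
  have hφ' : φ * D = (l3 ^ 2 - l2 ^ 2) * (l2 ^ 2 * e1 - l1 ^ 2 * e2)
      - (l2 ^ 2 - l1 ^ 2) * (l3 ^ 2 * e2 - l2 ^ 2 * e3) := by
    rw [hφ]; field_simp
  have hψ' : ψ * (l2 ^ 2 - l1 ^ 2)
      = l2 ^ 2 * e1 - l1 ^ 2 * e2 - l1 * l2 * (l2 - l1) * φ := by
    rw [hψ]; field_simp
  have hθ' : θ * (l3 ^ 2 * φ ^ 2) = e3 - ψ - l3 * φ := by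
    rw [hθ]; field_simp
  have key3 : ψ + φ * l3 + θ * φ ^ 2 * l3 ^ 2 = e3 := by linear_combination hθ'
  have key2 : ψ + φ * l2 + θ * φ ^ 2 * l2 ^ 2 = e2 := by
    have h0 : l3 ^ 2 * (l2 ^ 2 - l1 ^ 2) *
        (ψ + φ * l2 + θ * φ ^ 2 * l2 ^ 2 - e2) = 0 := by
      linear_combination ((l2 ^ 2 - l1 ^ 2) * l2 ^ 2) * hθ'
        + (l3 ^ 2 - l2 ^ 2) * hψ' - hφ' + φ * hD
    have hne : l3 ^ 2 * (l2 ^ 2 - l1 ^ 2) ≠ 0 :=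
      mul_ne_zero (pow_ne_zero 2 hl3) hQ
    have := (mul_eq_zero.mp h0).resolve_left hne
    linarith
  have key1 : ψ + φ * l1 + θ * φ ^ 2 * l1 ^ 2 = e1 := by
    have h0 : l2 ^ 2 * (ψ + φ * l1 + θ * φ ^ 2 * l1 ^ 2 - e1) = 0 := by
      linear_combination hψ' + l1 ^ 2 * key2
    have hne : l2 ^ 2 ≠ 0 := pow_ne_zero 2 hl2
    have := (mul_eq_zero.mp h0).resolve_left hne
    linarith
  exact ⟨by rw [← he1]; exact key1, by rw [← he2]; exact key2, by rw [← he3]; exact key3⟩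
end

section
/- Let h > 0 and let λ₁, λ₂ be real numbers with λ₁ ≠ λ₂ and λ₁ ≠ 0. Set φ = ((λ₂²h − λ₁²h + 2λ₁)e^{λ₁h} − 2λ₁e^{λ₂h})/(λ₁ − λ₂)²; assume φ ≠ 0; set ψ = ((2 − λ₁h)e^{λ₁h} − λ₁φ)/2 and θ = (he^{λ₁h} − φ)/(2λ₁φ²). Then: φ + 2λ₁θφ² = he^{λ₁h}; ψ + φλ₁ + θφ²λ₁² = e^{λ₁h}; and ψ + φλ₂ + θφ²λ₂² = e^{λ₂h}. -/
/-!
With `c = θ φ²` the exactness conditions say that the quadratic `p(λ) = ψ + φ λ + c λ²` agrees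
with `λ ↦ e^{λh}` to first order at `λ₁` (`p'(λ₁) = h e^{λ₁h}`) and to zeroth order at `λ₂`.
The given `φ`, `θ`, `ψ` are the solution of this Hermite interpolation problem; once denominators
are cleared, each condition is a linear combination of the defining equations.
-/

theorem quadratic_hermite_interpolation {K : Type*} [Field K] [CharZero K]
    {l1 l2 v₁ s v₂ φ ψ c : K} (h1 : l1 ≠ 0)
    (hφ : (l1 - l2) ^ 2 * φ = (l2 ^ 2 - l1 ^ 2) * s + 2 * l1 * (v₁ - v₂))
    (hc : 2 * l1 * c = s - φ) (hψ : 2 * ψ = 2 * v₁ - l1 * s - l1 * φ) :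
    φ + 2 * l1 * c = s ∧ ψ + φ * l1 + c * l1 ^ 2 = v₁ ∧ ψ + φ * l2 + c * l2 ^ 2 = v₂ := by
  refine ⟨by linear_combination hc, by linear_combination (hψ + l1 * hc) / 2, ?_⟩
  apply mul_left_cancel₀ (mul_ne_zero two_ne_zero h1)
  linear_combination l1 * hψ + l2 ^ 2 * hc - hφ

theorem mul_sq_eq_of_eq_div_mul_sq {K : Type*} [Field K] {a b θ φ : K} (ha : a ≠ 0) (hφ : φ ≠ 0)
    (hθ : θ = b / (a * φ ^ 2)) : a * (θ * φ ^ 2) = b := by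
  rw [hθ]
  field_simp

theorem explicit_params_double_eigenvalue_general
    (h l1 l2 : ℝ) (h12 : l1 ≠ l2) (h1 : l1 ≠ 0)
    (φ ψ θ : ℝ)
    (hφ : φ = ((l2 ^ 2 * h - l1 ^ 2 * h + 2 * l1) * Real.exp (l1 * h)
      - 2 * l1 * Real.exp (l2 * h)) / (l1 - l2) ^ 2)
    (hφne : φ ≠ 0)
    (hψ : ψ = ((2 - l1 * h) * Real.exp (l1 * h) - l1 * φ) / 2)
    (hθ : θ = (h * Real.exp (l1 * h) - φ) / (2 * l1 * φ ^ 2)) :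
    φ + 2 * l1 * θ * φ ^ 2 = h * Real.exp (l1 * h) ∧
    ψ + φ * l1 + θ * φ ^ 2 * l1 ^ 2 = Real.exp (l1 * h) ∧
    ψ + φ * l2 + θ * φ ^ 2 * l2 ^ 2 = Real.exp (l2 * h) := by
  have hφ' : (l1 - l2) ^ 2 * φ = (l2 ^ 2 - l1 ^ 2) * (h * Real.exp (l1 * h))
      + 2 * l1 * (Real.exp (l1 * h) - Real.exp (l2 * h)) := by
    rw [hφ, mul_div_cancel₀ _ (pow_ne_zero 2 (sub_ne_zero.mpr h12))]
    ring
  have hc := mul_sq_eq_of_eq_div_mul_sq (mul_ne_zero two_ne_zero h1) hφne hθ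
  have hψ' : 2 * ψ = 2 * Real.exp (l1 * h) - l1 * (h * Real.exp (l1 * h)) - l1 * φ := by
    rw [hψ]
    ring
  rw [mul_assoc (2 * l1)]
  exact quadratic_hermite_interpolation h1 hφ' hc hψ'

/-- For eigenvalues `λ₁, λ₁, λ₂` (`λ₁ ≠ λ₂`, `λ₁ ≠ 0`), the parameters of
the explicit scheme given by (eeds4) satisfy the exactness conditions (eeds2). -/
theorem explicit_params_double_eigenvalue
    (h l1 l2 : ℝ) (hh : 0 < h) (h12 : l1 ≠ l2) (h1 : l1 ≠ 0)
    (φ ψ θ : ℝ)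
    (hφ : φ = ((l2 ^ 2 * h - l1 ^ 2 * h + 2 * l1) * Real.exp (l1 * h)
      - 2 * l1 * Real.exp (l2 * h)) / (l1 - l2) ^ 2)
    (hφne : φ ≠ 0)
    (hψ : ψ = ((2 - l1 * h) * Real.exp (l1 * h) - l1 * φ) / 2)
    (hθ : θ = (h * Real.exp (l1 * h) - φ) / (2 * l1 * φ ^ 2)) :
    φ + 2 * l1 * θ * φ ^ 2 = h * Real.exp (l1 * h) ∧
    ψ + φ * l1 + θ * φ ^ 2 * l1 ^ 2 = Real.exp (l1 * h) ∧
    ψ + φ * l2 + θ * φ ^ 2 * l2 ^ 2 = Real.exp (l2 * h) :=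
  explicit_params_double_eigenvalue_general h l1 l2 h12 h1 φ ψ θ hφ hφne hψ hθ
end

section
/- Let ψ, φ, θ, h, λ be real numbers with φλθ ≠ 1, satisfying the two conditions: ψ + φλ(1 − θ) = e^{λh}(1 − φλθ) and φ(1 − θ + ψθ) = he^{λh}(1 − φλθ)². Then every triple of sequences x, y, z : ℕ → ℝ satisfying, for all k, x_{k+1} − ψx_k = φ[θ(λx_{k+1} + y_{k+1}) + (1 − θ)(λx_k + y_k)], y_{k+1} − ψy_k = φλ[θy_{k+1} + (1 − θ)y_k], and z_{k+1} − ψz_k = φλ[θz_{k+1} + (1 − θ)z_k], also satisfies, for all k: x_{k+1} = (x_k + h y_k)e^{λh}, y_{k+1} = y_k e^{λh}, z_{k+1} = z_k e^{λh}. In particular the parameters θ = 0, φ = he^{λh}, ψ = (1 − λh)e^{λh} satisfy the two conditions. -/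
/-- If the parameters satisfy the two conditions (36), then any solution
of the implicit scheme for the Jordan system `x' = J₅x` coincides with the exact solution
at grid points; in particular `θ = 0, φ = he^{λh}, ψ = (1 − λh)e^{λh}` satisfy the two
conditions. -/
theorem implicit_scheme_exact_jordan_J5
    (ψ φ θ h lam : ℝ) (h1 : φ * lam * θ ≠ 1)
    (c1 : ψ + φ * lam * (1 - θ) = Real.exp (lam * h) * (1 - φ * lam * θ))
    (c2 : φ * (1 - θ + ψ * θ) = h * Real.exp (lam * h) * (1 - φ * lam * θ) ^ 2) :
    (∀ x y z : ℕ → ℝ,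
      (∀ k, x (k + 1) - ψ * x k =
        φ * (θ * (lam * x (k + 1) + y (k + 1)) + (1 - θ) * (lam * x k + y k))) →
      (∀ k, y (k + 1) - ψ * y k = φ * lam * (θ * y (k + 1) + (1 - θ) * y k)) →
      (∀ k, z (k + 1) - ψ * z k = φ * lam * (θ * z (k + 1) + (1 - θ) * z k)) →
      ∀ k, x (k + 1) = (x k + h * y k) * Real.exp (lam * h) ∧
        y (k + 1) = y k * Real.exp (lam * h) ∧
        z (k + 1) = z k * Real.exp (lam * h)) ∧
    ((1 - lam * h) * Real.exp (lam * h) + (h * Real.exp (lam * h)) * lam * (1 - 0) =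
        Real.exp (lam * h) * (1 - (h * Real.exp (lam * h)) * lam * 0) ∧
      (h * Real.exp (lam * h)) * (1 - 0 + (1 - lam * h) * Real.exp (lam * h) * 0) =
        h * Real.exp (lam * h) * (1 - (h * Real.exp (lam * h)) * lam * 0) ^ 2) := by
  have hd : (1 : ℝ) - φ * lam * θ ≠ 0 := sub_ne_zero.mpr (Ne.symm h1)
  have key : φ * (θ * Real.exp (lam * h) + 1 - θ) =
      h * Real.exp (lam * h) * (1 - φ * lam * θ) := by
    apply mul_left_cancel₀ hd
    linear_combination c2 - φ * θ * c1
  constructor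
  · intro x y z hx hy hz k
    have ey : y (k + 1) = y k * Real.exp (lam * h) := by
      apply mul_left_cancel₀ hd
      linear_combination hy k + y k * c1
    refine ⟨?_, ey, ?_⟩
    · apply mul_left_cancel₀ hd
      linear_combination hx k + x k * c1 + φ * θ * ey + y k * key
    · apply mul_left_cancel₀ hd
      linear_combination hz k + z k * c1
  · constructor <;> ring
end
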